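/- arXiv:2007.02531 — 4 statements merged into one kernel-verified Lean document; each statement's English description precedes it below -/
import Mathlib

section
/- For any positive real numbers p, q with 0 < p < 1, 0 < q < 1, p ≠ q, and any positive integer δ₁, the sum ∑_{k=2}^{δ₁+1} ((1-p)^{k-1} - (1-q)^{k-1})/(q-p) + ∑_{k=δ₁+2}^{∞} ((1-p)^{δ₁} - (1-q)^{δ₁})·(1-p)^{k-δ₁-1}/(q-p) equals (1 - (1-q)^{δ₁})/(pq). -/
/-! With `a = 1 - p` and `b = 1 - q`, the `a`-parts of the finite sum and of the tail add up to the
full geometric series `a / p`, so the numerator over `q - p` is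
`a / p - b (1 - b ^ δ₁) / q - a b ^ δ₁ / p = (1 - b ^ δ₁) (a / p - b / q)`,
and `a / p - b / q = (q - p) / (p q)`. -/

open Finset

lemma sum_Icc_two_succ_comp_pred {M : Type*} [AddCommMonoid M] (f : ℕ → M) (n : ℕ) :
    ∑ k ∈ Icc 2 (n + 1), f (k - 1) = ∑ i ∈ range n, f (i + 1) := by
  rw [← Ico_add_one_right_eq_Icc, sum_Ico_eq_sum_range]
  refine sum_congr (by simp) fun i _ => ?_
  congr 1
  omega

lemma sum_range_pow_succ_eq {K : Type*} [Field K] {x : K} (hx : x ≠ 1) (n : ℕ) :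
    ∑ i ∈ range n, x ^ (i + 1) = x * (1 - x ^ n) / (1 - x) := by
  have hx' : 1 - x ≠ 0 := sub_ne_zero.2 hx.symm
  simp_rw [pow_succ', ← mul_sum, geom_sum_eq hx]
  field_simp
  ring

lemma tsum_mul_pow_succ_eq {K : Type*} [NormedDivisionRing K] {x : K} (hx : ‖x‖ < 1) (c : K) :
    ∑' j : ℕ, c * x ^ (j + 1) = c * x * (1 - x)⁻¹ := by
  simp_rw [pow_succ', ← mul_assoc]
  rw [tsum_mul_left, tsum_geometric_of_norm_lt_one hx]

theorem stmt_0_general (p q : ℝ) (δ₁ : ℕ)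
    (hp : 0 < p) (hp1 : p < 1) (hq : 0 < q) (hpq : p ≠ q) :
    (∑ k ∈ Finset.Icc 2 (δ₁ + 1), ((1 - p) ^ (k - 1) - (1 - q) ^ (k - 1)) / (q - p))
      + (∑' j : ℕ, ((1 - p) ^ δ₁ - (1 - q) ^ δ₁) * (1 - p) ^ (j + 1) / (q - p))
    = (1 - (1 - q) ^ δ₁) / (p * q) := by
  have hp_norm : ‖1 - p‖ < 1 := by
    rw [Real.norm_eq_abs, abs_lt]
    constructor <;> linarith
  have hqp : q - p ≠ 0 := sub_ne_zero.2 hpq.symm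
  rw [← sum_div, sum_sub_distrib, sum_Icc_two_succ_comp_pred (fun k => (1 - p) ^ k),
    sum_Icc_two_succ_comp_pred (fun k => (1 - q) ^ k),
    sum_range_pow_succ_eq (by linarith), sum_range_pow_succ_eq (by linarith),
    tsum_div_const, tsum_mul_pow_succ_eq hp_norm, sub_sub_cancel, sub_sub_cancel]
  field_simp
  ring

theorem stmt_0 (p q : ℝ) (δ₁ : ℕ)
    (hp : 0 < p) (hp1 : p < 1) (hq : 0 < q) (hq1 : q < 1) (hpq : p ≠ q)
    (hδ₁ : 1 ≤ δ₁) :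
    (∑ k ∈ Finset.Icc 2 (δ₁ + 1), ((1 - p) ^ (k - 1) - (1 - q) ^ (k - 1)) / (q - p))
      + (∑' j : ℕ, ((1 - p) ^ δ₁ - (1 - q) ^ δ₁) * (1 - p) ^ (j + 1) / (q - p))
    = (1 - (1 - q) ^ δ₁) / (p * q) :=
  stmt_0_general p q δ₁ hp hp1 hq hpq
end

section
/- For 0 < p < 1, 0 < q < 1, p ≠ q, and positive integer δ₁, the weighted sum ∑_{k=2}^{δ₁+1} k·((1-p)^{k-1} - (1-q)^{k-1})/(q-p) + ∑_{k=δ₁+2}^{∞} k·((1-p)^{δ₁} - (1-q)^{δ₁})·(1-p)^{k-δ₁-1}/(q-p) equals ((p+q)(1 - (1-q)^{δ₁}) - pq·δ₁·(1-q)^{δ₁})/(p²q²). -/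
/-!
With `a = 1 - p` and `b = 1 - q`, the finite part is `(S(a) - S(b)) / (q - p)`, where
`S(x) = ∑_{k=2}^{δ₁+1} k x^{k-1}` has a closed form because `(1 - x)² S(x)` telescopes. The tail
is `(a^δ₁ - b^δ₁) / (q - p)` times `∑_j (δ₁ + 2 + j) a^{j+1}`, a combination of the geometric
series and its derivative.
-/

open Finset

theorem sum_Icc_two_natCast_mul_pow_pred_mul_one_sub_sq {R : Type*} [CommRing R] (x : R) (n : ℕ) :
    (∑ k ∈ Icc 2 (n + 1), (k : R) * x ^ (k - 1)) * (1 - x) ^ 2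
      = x * (2 - x) - (n + 2) * x ^ (n + 1) + (n + 1) * x ^ (n + 2) := by
  induction n with
  | zero => simp; ring
  | succ n ih =>
    rw [sum_Icc_succ_top (by omega : 2 ≤ n + 1 + 1)]
    push_cast
    linear_combination ih

theorem hasSum_add_natCast_mul_pow_succ {K : Type*} [NormedField K] {x : K} (hx : ‖x‖ < 1)
    (m : K) :
    HasSum (fun j : ℕ => (m + j) * x ^ (j + 1)) (x * (m * (1 - x) + x) / (1 - x) ^ 2) := by
  have hx1 : 1 - x ≠ 0 := sub_ne_zero.mpr fun h => by simp [← h] at hx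
  have hsum := ((hasSum_geometric_of_norm_lt_one hx).mul_left (m * x)).add
    ((hasSum_coe_mul_geometric_of_norm_lt_one hx).mul_left x)
  have hterm : (fun j : ℕ => (m + j) * x ^ (j + 1))
      = fun j : ℕ => m * x * x ^ j + x * (j * x ^ j) := by
    ext j; ring
  rw [hterm, show x * (m * (1 - x) + x) / (1 - x) ^ 2 = m * x * (1 - x)⁻¹ + x * (x / (1 - x) ^ 2)
    by field_simp]
  exact hsum

theorem stmt_1_general (p q : ℝ) (δ₁ : ℕ)
    (hp : 0 < p) (hp1 : p < 1) (hq : 0 < q) (hpq : p ≠ q) :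
    (∑ k ∈ Finset.Icc 2 (δ₁ + 1), (k : ℝ) * ((1 - p) ^ (k - 1) - (1 - q) ^ (k - 1)) / (q - p))
      + (∑' j : ℕ, ((δ₁ + 2 + j : ℕ) : ℝ) * (((1 - p) ^ δ₁ - (1 - q) ^ δ₁) * (1 - p) ^ (j + 1)) / (q - p))
    = ((p + q) * (1 - (1 - q) ^ δ₁) - p * q * δ₁ * (1 - q) ^ δ₁) / (p ^ 2 * q ^ 2) := by
  have hqp : q - p ≠ 0 := sub_ne_zero.mpr hpq.symm
  have hnorm : ‖1 - p‖ < 1 := by rw [Real.norm_eq_abs, abs_lt]; constructor <;> linarith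
  have hfinite :
      ∑ k ∈ Icc 2 (δ₁ + 1), (k : ℝ) * ((1 - p) ^ (k - 1) - (1 - q) ^ (k - 1)) / (q - p)
      = (∑ k ∈ Icc 2 (δ₁ + 1), (k : ℝ) * (1 - p) ^ (k - 1)
        - ∑ k ∈ Icc 2 (δ₁ + 1), (k : ℝ) * (1 - q) ^ (k - 1)) / (q - p) := by
    rw [← sum_sub_distrib, sum_div]
    simp only [mul_sub]
  set C := (1 - p) ^ δ₁ - (1 - q) ^ δ₁
  have htail : ∑' j : ℕ, ((δ₁ + 2 + j : ℕ) : ℝ) * (C * (1 - p) ^ (j + 1)) / (q - p)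
      = C / (q - p) * ((1 - p) * ((δ₁ + 2) * p + (1 - p)) / p ^ 2) := by
    have h := (hasSum_add_natCast_mul_pow_succ hnorm ((δ₁ : ℝ) + 2)).mul_left (C / (q - p))
    rw [sub_sub_cancel] at h
    rw [← h.tsum_eq]
    exact tsum_congr fun j => by push_cast; ring
  rw [hfinite, htail]
  have hSp := sum_Icc_two_natCast_mul_pow_pred_mul_one_sub_sq (1 - p) δ₁
  have hSq := sum_Icc_two_natCast_mul_pow_pred_mul_one_sub_sq (1 - q) δ₁
  simp only [sub_sub_cancel] at hSp hSq
  rw [← eq_div_iff (by positivity)] at hSp hSq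
  rw [hSp, hSq]
  field_simp
  ring

theorem stmt_1 (p q : ℝ) (δ₁ : ℕ)
    (hp : 0 < p) (hp1 : p < 1) (hq : 0 < q) (hq1 : q < 1) (hpq : p ≠ q)
    (hδ₁ : 1 ≤ δ₁) :
    (∑ k ∈ Finset.Icc 2 (δ₁ + 1), (k : ℝ) * ((1 - p) ^ (k - 1) - (1 - q) ^ (k - 1)) / (q - p))
      + (∑' j : ℕ, ((δ₁ + 2 + j : ℕ) : ℝ) * (((1 - p) ^ δ₁ - (1 - q) ^ δ₁) * (1 - p) ^ (j + 1)) / (q - p))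
    = ((p + q) * (1 - (1 - q) ^ δ₁) - p * q * δ₁ * (1 - q) ^ δ₁) / (p ^ 2 * q ^ 2) :=
  stmt_1_general p q δ₁ hp hp1 hq hpq
end

section
/- For 0 < p < 1, 0 < q < 1, p ≠ q, integers δ₁ ≥ 1, δ₂ ≥ 2 with δ₁ ≤ δ₂ - 1, the three quantities S_A = (1-(1-q)^{δ₁})/(pq), S_B = (q·δ₂ - q - 1 + (1 - q·δ₂ + q·δ₁ + q)·(1-q)^{δ₁})/q², and S_C = (p + (q-p)·(1-q)^{δ₁})/(p·q²) satisfy (S_A + S_B + S_C)·x = 1 where x = pq/((1-p) + p·δ₂ - p·(δ₂-δ₁-1)·(1-q)^{δ₁}). -/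
/-! Multiplying out, `p q² (S_A + S_B + S_C) = q D` where `D` is the denominator of `x`, identically in
`t = (1 - q)^δ₁`. Writing `D = 1 + p δ₁ + p (δ₂ - δ₁ - 1)(1 - t)` shows `D ≥ 1` once `t ≤ 1`, so
`x = p q / D` is exactly the reciprocal of the total mass. -/

theorem dtr_total_mass_eq (p q t d₁ d₂ : ℝ) (hp : p ≠ 0) (hq : q ≠ 0) :
    (1 - t) / (p * q) + (q * d₂ - q - 1 + (1 - q * d₂ + q * d₁ + q) * t) / q ^ 2
        + (p + (q - p) * t) / (p * q ^ 2)
      = ((1 - p) + p * d₂ - p * (d₂ - d₁ - 1) * t) / (p * q) := by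
  field_simp
  ring

theorem dtr_normalizer_pos {p t : ℝ} {δ₁ δ₂ : ℕ} (hp : 0 ≤ p) (ht : t ≤ 1) (hδ : δ₁ + 1 ≤ δ₂) :
    0 < (1 - p) + p * δ₂ - p * ((δ₂ : ℝ) - δ₁ - 1) * t := by
  have hgap : (0 : ℝ) ≤ (δ₂ : ℝ) - δ₁ - 1 := by
    rw [sub_sub, sub_nonneg]
    exact_mod_cast hδ
  have hrewrite : (1 - p) + p * δ₂ - p * ((δ₂ : ℝ) - δ₁ - 1) * t
      = 1 + p * δ₁ + p * ((δ₂ : ℝ) - δ₁ - 1) * (1 - t) := by ring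
  rw [hrewrite]
  have : 0 ≤ p * ((δ₂ : ℝ) - δ₁ - 1) * (1 - t) := by
    have := sub_nonneg.mpr ht
    positivity
  positivity

theorem stmt_13_general (p q : ℝ) (δ₁ δ₂ : ℕ)
    (hp : 0 < p) (hq : 0 < q) (hq1 : q < 1)
    (hδ₂ : 2 ≤ δ₂) (hle : δ₁ ≤ δ₂ - 1) :
    ((1 - (1 - q) ^ δ₁) / (p * q)
        + (q * δ₂ - q - 1 + (1 - q * δ₂ + q * δ₁ + q) * (1 - q) ^ δ₁) / q ^ 2
        + (p + (q - p) * (1 - q) ^ δ₁) / (p * q ^ 2))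
      * (p * q / ((1 - p) + p * δ₂ - p * ((δ₂ : ℝ) - δ₁ - 1) * (1 - q) ^ δ₁)) = 1 := by
  have ht : (1 - q) ^ δ₁ ≤ 1 := pow_le_one₀ (by linarith) (by linarith)
  have hD := dtr_normalizer_pos (δ₁ := δ₁) (δ₂ := δ₂) hp.le ht (by omega)
  rw [dtr_total_mass_eq p q _ δ₁ δ₂ hp.ne' hq.ne']
  field_simp

theorem stmt_13 (p q : ℝ) (δ₁ δ₂ : ℕ)
    (hp : 0 < p) (hp1 : p < 1) (hq : 0 < q) (hq1 : q < 1) (hpq : p ≠ q)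
    (hδ₁ : 1 ≤ δ₁) (hδ₂ : 2 ≤ δ₂) (hle : δ₁ ≤ δ₂ - 1) :
    ((1 - (1 - q) ^ δ₁) / (p * q)
        + (q * δ₂ - q - 1 + (1 - q * δ₂ + q * δ₁ + q) * (1 - q) ^ δ₁) / q ^ 2
        + (p + (q - p) * (1 - q) ^ δ₁) / (p * q ^ 2))
      * (p * q / ((1 - p) + p * δ₂ - p * ((δ₂ : ℝ) - δ₁ - 1) * (1 - q) ^ δ₁)) = 1 :=
  stmt_13_general p q δ₁ δ₂ hp hq hq1 hδ₂ hle
end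

section
/- Consider the Markov chain on states (k,d) where from state (k,d): with probability p transition to (1, k+d) and with probability 1-p to (k+1, d) whenever k > δ₁ or d < δ₂; with probability q transition to (k+1, 0) and with probability 1-q to (k+1, d) whenever k ≤ δ₁ and d ≥ δ₂. Starting from state (2,0), every reachable state (k,d) satisfies (k ≥ 2 and d = 0) or (k ≥ 1 and d ≥ 2); in particular no reachable state has d = 1. -/
/-- One step of the DTR Markov chain on states `(k, d)` (relay age, age gain),
    recording all transitions that occur with positive probability when `0 < p < 1`
    and `0 < q < 1`. -/
def dtrStep (δ₁ δ₂ : ℕ) (s t : ℕ × ℕ) : Prop :=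
  ((s.1 > δ₁ ∨ s.2 < δ₂) ∧ (t = (1, s.1 + s.2) ∨ t = (s.1 + 1, s.2)))
    ∨ ((s.1 ≤ δ₁ ∧ s.2 ≥ δ₂) ∧ (t = (s.1 + 1, 0) ∨ t = (s.1 + 1, s.2)))

theorem stmt_18 (δ₁ δ₂ : ℕ) (hδ₁ : 1 ≤ δ₁) (hδ₂ : 2 ≤ δ₂) (k d : ℕ)
    (hreach : Relation.ReflTransGen (dtrStep δ₁ δ₂) (2, 0) (k, d)) :
    (2 ≤ k ∧ d = 0) ∨ (1 ≤ k ∧ 2 ≤ d) := by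
  suffices h : ∀ t : ℕ × ℕ, Relation.ReflTransGen (dtrStep δ₁ δ₂) (2, 0) t →
      (2 ≤ t.1 ∧ t.2 = 0) ∨ (1 ≤ t.1 ∧ 2 ≤ t.2) by
    exact h (k, d) hreach
  intro t ht
  induction ht with
  | refl => left; exact ⟨le_refl 2, rfl⟩
  | tail _ hstep ih =>
    rename_i b c _
    rcases hstep with ⟨_, hc | hc⟩ | ⟨⟨_, hge⟩, hc | hc⟩ <;> subst hc <;> simp_all <;> omega
end
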